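/- Let k > 0 and let K ⊂ ℝ³ be a nonempty compact set. Then sup_{|x|=r} sup_{y∈K} |x| · | e^{ik|x-y|}/|x-y| − (e^{ik|x|}/|x|) e^{−ik x̂·y} | → 0 as r → ∞, where x̂ = x/|x|. -/

import Mathlib

/-!
Write `ρ = ‖x‖`, `a = ‖x - y‖` and `b = ρ - ⟪x̂, y⟫`. Then
`ρ (e^{ika}/a - e^{ikb}/ρ) = ((ρ - a)/a) e^{ika} + (e^{ika} - e^{ikb})`, and `|ρ - a| ≤ ‖y‖`,
`|e^{ika} - e^{ikb}| ≤ |k| |a - b|`. Since `a² - b² = ‖y‖² - ⟪x̂, y⟫² ∈ [0, ‖y‖²]`, the phase error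
`a - b` is `O(‖y‖²/ρ)`, so the whole expression is `O(1/ρ)` uniformly for `y` in a bounded set.
-/

open Real Complex Filter Topology

lemma norm_cexp_I_mul_mul (k t : ℝ) : ‖cexp (I * k * t)‖ = 1 := by
  rw [mul_assoc, ← ofReal_mul, norm_exp_I_mul_ofReal]

lemma norm_cexp_I_mul_sub_cexp_I_mul_le (k s t : ℝ) :
    ‖cexp (I * k * s) - cexp (I * k * t)‖ ≤ |k| * |s - t| := by
  have hfactor : cexp (I * k * s) - cexp (I * k * t) =
      cexp (I * k * t) * (cexp (I * ↑(k * (s - t))) - 1) := by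
    rw [mul_sub, ← Complex.exp_add]
    push_cast
    ring_nf
  rw [hfactor, norm_mul, norm_cexp_I_mul_mul, one_mul, ← abs_mul]
  exact norm_exp_I_mul_ofReal_sub_one_le

lemma mul_norm_cexp_div_sub_cexp_div_le (k : ℝ) {ρ a : ℝ} (hρ : 0 < ρ) (ha : 0 < a) (b : ℝ) :
    ρ * ‖cexp (I * k * a) / a - cexp (I * k * b) / ρ‖ ≤ |ρ - a| / a + |k| * |a - b| := by
  have hsplit : (ρ : ℂ) * (cexp (I * k * a) / a - cexp (I * k * b) / ρ) =
      ((ρ - a : ℝ) / a : ℂ) * cexp (I * k * a) + (cexp (I * k * a) - cexp (I * k * b)) := by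
    have : (a : ℂ) ≠ 0 := by exact_mod_cast ha.ne'
    have : (ρ : ℂ) ≠ 0 := by exact_mod_cast hρ.ne'
    field_simp
    push_cast
    ring
  calc ρ * ‖cexp (I * k * a) / a - cexp (I * k * b) / ρ‖
      = ‖(ρ : ℂ) * (cexp (I * k * a) / a - cexp (I * k * b) / ρ)‖ := by
        rw [norm_mul, norm_real, Real.norm_of_nonneg hρ.le]
    _ ≤ |ρ - a| / a + |k| * |a - b| := by
        rw [hsplit]
        refine (norm_add_le _ _).trans (add_le_add ?_ (norm_cexp_I_mul_sub_cexp_I_mul_le _ _ _))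
        rw [norm_mul, norm_cexp_I_mul_mul, mul_one, norm_div,
          norm_real, norm_real, Real.norm_eq_abs, Real.norm_of_nonneg ha.le]

variable {E : Type*} [NormedAddCommGroup E] [InnerProductSpace ℝ E]

lemma abs_norm_sub_sub_inner_le {x y : E} (hyx : ‖y‖ < ‖x‖) :
    |‖x - y‖ - (‖x‖ - inner ℝ (‖x‖⁻¹ • x) y)| ≤ ‖y‖ ^ 2 / (‖x‖ - ‖y‖) := by
  have hx : 0 < ‖x‖ := (norm_nonneg y).trans_lt hyx
  set c := inner ℝ (‖x‖⁻¹ • x) y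
  have hc : |c| ≤ ‖y‖ := by
    simpa [norm_smul, hx.ne'] using abs_real_inner_le_norm (‖x‖⁻¹ • x) y
  have hxy : inner ℝ x y = ‖x‖ * c := by
    simp only [c, real_inner_smul_left, mul_inv_cancel_left₀ hx.ne']
  have hsq : ‖x - y‖ ^ 2 - (‖x‖ - c) ^ 2 = ‖y‖ ^ 2 - c ^ 2 := by
    rw [norm_sub_sq_real, hxy]; ring
  have hlow : ‖x‖ - ‖y‖ ≤ ‖x - y‖ := norm_sub_norm_le x y
  obtain ⟨hc₁, hc₂⟩ := abs_le.mp hc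
  have hle : ‖x‖ - c ≤ ‖x - y‖ := by nlinarith
  rw [abs_of_nonneg (sub_nonneg.mpr hle), le_div_iff₀ (sub_pos.mpr hyx)]
  nlinarith

lemma farField_error_le (k : ℝ) {x y : E} (hyx : ‖y‖ < ‖x‖) :
    ‖x‖ * ‖cexp (I * k * ‖x - y‖) / (‖x - y‖ : ℂ) -
        (cexp (I * k * ‖x‖) / (‖x‖ : ℂ)) * cexp (-I * k * (inner ℝ (‖x‖⁻¹ • x) y : ℝ))‖ ≤
      (‖y‖ + |k| * ‖y‖ ^ 2) / (‖x‖ - ‖y‖) := by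
  have hx : 0 < ‖x‖ := (norm_nonneg y).trans_lt hyx
  have hgap : 0 < ‖x‖ - ‖y‖ := sub_pos.mpr hyx
  have hlow : ‖x‖ - ‖y‖ ≤ ‖x - y‖ := norm_sub_norm_le x y
  have hphase : cexp (I * k * ‖x‖) / (‖x‖ : ℂ) * cexp (-I * k * (inner ℝ (‖x‖⁻¹ • x) y : ℝ)) =
      cexp (I * k * ↑(‖x‖ - inner ℝ (‖x‖⁻¹ • x) y)) / ‖x‖ := by
    rw [div_mul_eq_mul_div, ← Complex.exp_add]
    push_cast
    ring_nf
  have hamp : |‖x‖ - ‖x - y‖| / ‖x - y‖ ≤ ‖y‖ / (‖x‖ - ‖y‖) := by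
    gcongr
    exact (abs_norm_sub_norm_le x (x - y)).trans_eq (by rw [sub_sub_cancel])
  rw [hphase, add_div, mul_div_assoc]
  refine (mul_norm_cexp_div_sub_cexp_div_le k hx (hgap.trans_le hlow) _).trans
    (add_le_add hamp ?_)
  exact mul_le_mul_of_nonneg_left (abs_norm_sub_sub_inner_le hyx) (abs_nonneg k)

theorem farfield_asymptotic_general (k : ℝ)
    (K : Set (EuclideanSpace ℝ (Fin 3))) (hK : IsCompact K) :
    ∀ ε > 0, ∃ R : ℝ, ∀ x : EuclideanSpace ℝ (Fin 3), R ≤ ‖x‖ → ∀ y ∈ K,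
      ‖x‖ * ‖Complex.exp (Complex.I * k * ‖x - y‖) / (‖x - y‖ : ℂ) -
          (Complex.exp (Complex.I * k * ‖x‖) / (‖x‖ : ℂ)) *
            Complex.exp (-Complex.I * k * (inner ℝ (‖x‖⁻¹ • x) y : ℝ))‖ < ε := by
  intro ε hε
  obtain ⟨C, hC, hKC⟩ := hK.isBounded.exists_pos_norm_le
  have hlim : Tendsto (fun ρ => (C + |k| * C ^ 2) / (ρ - C)) atTop (𝓝 0) :=
    tendsto_const_nhds.div_atTop (tendsto_atTop_add_const_right _ (-C) tendsto_id)
  obtain ⟨R, hR⟩ := eventually_atTop.mp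
    ((hlim.eventually (gt_mem_nhds hε)).and (eventually_gt_atTop C))
  refine ⟨R, fun x hx y hy => ?_⟩
  obtain ⟨hsmall, hCx⟩ := hR ‖x‖ hx
  have hyC := hKC y hy
  calc _ ≤ (‖y‖ + |k| * ‖y‖ ^ 2) / (‖x‖ - ‖y‖) := farField_error_le k (hyC.trans_lt hCx)
    _ ≤ (C + |k| * C ^ 2) / (‖x‖ - C) := by gcongr
    _ < ε := hsmall

theorem farfield_asymptotic (k : ℝ) (hk : 0 < k)
    (K : Set (EuclideanSpace ℝ (Fin 3))) (hK : IsCompact K) (hKne : K.Nonempty) :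
    ∀ ε > 0, ∃ R : ℝ, ∀ x : EuclideanSpace ℝ (Fin 3), R ≤ ‖x‖ → ∀ y ∈ K,
      ‖x‖ * ‖Complex.exp (Complex.I * k * ‖x - y‖) / (‖x - y‖ : ℂ) -
          (Complex.exp (Complex.I * k * ‖x‖) / (‖x‖ : ℂ)) *
            Complex.exp (-Complex.I * k * (inner ℝ (‖x‖⁻¹ • x) y : ℝ))‖ < ε :=
  farfield_asymptotic_general k K hK
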